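/- arXiv:0704.2776 — 15 statements merged into one kernel-verified Lean document; each statement's English description precedes it below -/
import Mathlib

section
/- Let V₁ and V₂ be finite-dimensional real vector spaces, g ⊆ gl(V₁ ⊕ V₂) a Lie subalgebra such that every element of g preserves both V₁ and V₂, and such that the restriction maps g → gl(V₁) and g → gl(V₂) are both injective. If R : (V₁⊕V₂) × (V₁⊕V₂) → g is an alternating bilinear map satisfying the first Bianchi identity R(x,y)z + R(y,z)x + R(z,x)y = 0 for all x,y,z, then R(x,y) = 0 whenever x,y ∈ V₁, and R(x,y) = 0 whenever x,y ∈ V₂. -/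
attribute [local instance] LieRing.ofAssociativeRing

/- In the Bianchi identity for `x, y ∈ V₁`, `z ∈ V₂`, the last two terms lie in `V₁`, so the
`V₂`-component of `R(x,y)z` vanishes; its `V₁`-component vanishes since `R(x,y)` preserves `V₂`.
Thus `R(x,y)` kills `V₂`, and faithfulness on `V₂` forces `R(x,y) = 0`. Symmetrically for `V₂`. -/

section Bianchi

variable {k M₁ M₂ : Type*} [Semiring k] [AddCommMonoid M₁] [Module k M₁]
  [AddCommMonoid M₂] [Module k M₂] (R : M₁ × M₂ → M₁ × M₂ → Module.End k (M₁ × M₂))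
  (hpres₁ : ∀ a b (x : M₁), (R a b (x, 0)).2 = 0)
  (hpres₂ : ∀ a b (y : M₂), (R a b (0, y)).1 = 0)
  (hBianchi : ∀ a b c, R a b c + R b c a + R c a b = 0)
include hpres₁ hpres₂ hBianchi

theorem apply_inr_eq_zero_of_bianchi (x y : M₁) (z : M₂) : R (x, 0) (y, 0) (0, z) = 0 := by
  have hsnd := congrArg Prod.snd (hBianchi (x, 0) (y, 0) (0, z))
  simp only [Prod.snd_add, hpres₁, add_zero, Prod.snd_zero] at hsnd
  exact Prod.ext (hpres₂ _ _ z) hsnd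

theorem apply_inl_eq_zero_of_bianchi (x y : M₂) (z : M₁) : R (0, x) (0, y) (z, 0) = 0 := by
  have hfst := congrArg Prod.fst (hBianchi (0, x) (0, y) (z, 0))
  simp only [Prod.fst_add, hpres₂, add_zero, Prod.fst_zero] at hfst
  exact Prod.ext hfst (hpres₁ _ _ z)

end Bianchi

theorem stmt_0_general (V₁ V₂ : Type*) [AddCommGroup V₁] [Module ℝ V₁]
    [AddCommGroup V₂] [Module ℝ V₂]
    (g : LieSubalgebra ℝ (Module.End ℝ (V₁ × V₂)))
    (hpres₁ : ∀ A ∈ g, ∀ x : V₁, (A (x, 0)).2 = 0)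
    (hpres₂ : ∀ A ∈ g, ∀ y : V₂, (A (0, y)).1 = 0)
    (hfaith₁ : ∀ A ∈ g, (∀ x : V₁, A (x, 0) = 0) → A = 0)
    (hfaith₂ : ∀ A ∈ g, (∀ y : V₂, A (0, y) = 0) → A = 0)
    (R : (V₁ × V₂) →ₗ[ℝ] (V₁ × V₂) →ₗ[ℝ] Module.End ℝ (V₁ × V₂))
    (hval : ∀ a b, R a b ∈ g)
    (hBianchi : ∀ a b c, R a b c + R b c a + R c a b = 0) :
    (∀ x y : V₁, R (x, 0) (y, 0) = 0) ∧ (∀ x y : V₂, R (0, x) (0, y) = 0) := by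
  have hR₁ : ∀ a b x, (R a b (x, 0)).2 = 0 := fun a b => hpres₁ _ (hval a b)
  have hR₂ : ∀ a b y, (R a b (0, y)).1 = 0 := fun a b => hpres₂ _ (hval a b)
  exact ⟨fun x y => hfaith₂ _ (hval _ _)
      (apply_inr_eq_zero_of_bianchi (R · ·) hR₁ hR₂ hBianchi x y),
    fun x y => hfaith₁ _ (hval _ _)
      (apply_inl_eq_zero_of_bianchi (R · ·) hR₁ hR₂ hBianchi x y)⟩

theorem stmt_0 (V₁ V₂ : Type*) [AddCommGroup V₁] [Module ℝ V₁]
    [AddCommGroup V₂] [Module ℝ V₂]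
    [FiniteDimensional ℝ V₁] [FiniteDimensional ℝ V₂]
    (g : LieSubalgebra ℝ (Module.End ℝ (V₁ × V₂)))
    (hpres₁ : ∀ A ∈ g, ∀ x : V₁, (A (x, 0)).2 = 0)
    (hpres₂ : ∀ A ∈ g, ∀ y : V₂, (A (0, y)).1 = 0)
    (hfaith₁ : ∀ A ∈ g, (∀ x : V₁, A (x, 0) = 0) → A = 0)
    (hfaith₂ : ∀ A ∈ g, (∀ y : V₂, A (0, y) = 0) → A = 0)
    (R : (V₁ × V₂) →ₗ[ℝ] (V₁ × V₂) →ₗ[ℝ] Module.End ℝ (V₁ × V₂))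
    (hval : ∀ a b, R a b ∈ g)
    (halt : ∀ a b, R a b = - R b a)
    (hBianchi : ∀ a b c, R a b c + R b c a + R c a b = 0) :
    (∀ x y : V₁, R (x, 0) (y, 0) = 0) ∧ (∀ x y : V₂, R (0, x) (0, y) = 0) :=
  stmt_0_general V₁ V₂ g hpres₁ hpres₂ hfaith₁ hfaith₂ R hval hBianchi
end

section
/- Let V₁ and V₂ be finite-dimensional real vector spaces and g ⊆ gl(V₁ ⊕ V₂) a Lie subalgebra preserving V₁ and V₂ and acting faithfully on each. Then any formal curvature tensor R (an alternating bilinear map (V₁⊕V₂)² → g with the first Bianchi identity) is uniquely determined by its values R(x, y') for x ∈ V₁, y' ∈ V₂, and these values satisfy: R(x,y')z' = R(x,z')y' for all x ∈ V₁, y',z' ∈ V₂, and R(x,y')t = R(t,y')x for all x,t ∈ V₁, y' ∈ V₂. -/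
attribute [local instance 100] LieRing.ofAssociativeRing

/-!
Subtracting the cyclic term `R c a b = -R a c b` from the first Bianchi identity gives
`R a b c - R a c b = -R b c a`. Evaluated on vectors taken from `V₁` and `V₂`, the two sides of
this identity lie in different summands, so both vanish: this yields the two symmetries. For two
curvature tensors agreeing on mixed pairs, the same identity, with two of its three slots filled
by a mixed pair, shows that they also agree on `V₁ × V₁` and on `V₂ × V₂` once evaluated on the
other summand; faithfulness on that summand, applied to the difference of their values, then
shows that they agree everywhere.
-/

section

variable {K : Type*} [CommRing K]

structure IsFormalCurvature {M : Type*} [AddCommGroup M] [Module K M]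
    (R : M →ₗ[K] M →ₗ[K] Module.End K M) : Prop where
  antisymm : ∀ a b, R a b = -R b a
  bianchi : ∀ a b c, R a b c + R b c a + R c a b = 0

namespace IsFormalCurvature

theorem apply_sub_apply_swap {M : Type*} [AddCommGroup M] [Module K M]
    {R : M →ₗ[K] M →ₗ[K] Module.End K M} (hR : IsFormalCurvature R) (a b c : M) :
    R a b c - R a c b = -R b c a := by
  have h := hR.bianchi a b c
  rw [hR.antisymm c a, LinearMap.neg_apply, ← sub_eq_add_neg, add_sub_right_comm,
    add_eq_zero_iff_eq_neg] at h
  exact h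

variable {V₁ V₂ : Type*} [AddCommGroup V₁] [Module K V₁] [AddCommGroup V₂] [Module K V₂]
  {R : (V₁ × V₂) →ₗ[K] (V₁ × V₂) →ₗ[K] Module.End K (V₁ × V₂)}

theorem apply_inl_inr_inr_comm (hR : IsFormalCurvature R)
    (hpres₁ : ∀ a b (x : V₁), (R a b (x, 0)).2 = 0) (hpres₂ : ∀ a b (y : V₂), (R a b (0, y)).1 = 0)
    (x : V₁) (y z : V₂) : R (x, 0) (0, y) (0, z) = R (x, 0) (0, z) (0, y) := by
  have h := hR.apply_sub_apply_swap (x, 0) (0, y) (0, z)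
  refine sub_eq_zero.mp (Prod.ext ?_ ?_)
  · simp [hpres₂]
  · simp [h, hpres₁]

theorem apply_inl_inr_inl_comm (hR : IsFormalCurvature R)
    (hpres₁ : ∀ a b (x : V₁), (R a b (x, 0)).2 = 0) (hpres₂ : ∀ a b (y : V₂), (R a b (0, y)).1 = 0)
    (x t : V₁) (y : V₂) : R (x, 0) (0, y) (t, 0) = R (t, 0) (0, y) (x, 0) := by
  have h : R (x, 0) (0, y) (t, 0) - R (t, 0) (0, y) (x, 0) = R (x, 0) (t, 0) (0, y) := by
    rw [sub_eq_iff_eq_add.mp (hR.apply_sub_apply_swap (x, 0) (t, 0) (0, y))]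
    abel
  refine sub_eq_zero.mp (Prod.ext ?_ ?_)
  · simp [h, hpres₂]
  · simp [hpres₁]

theorem eq_of_apply_inl_inr_eq {R' : (V₁ × V₂) →ₗ[K] (V₁ × V₂) →ₗ[K] Module.End K (V₁ × V₂)}
    (hR : IsFormalCurvature R) (hR' : IsFormalCurvature R')
    (hfaith₁ : ∀ a b, (∀ x : V₁, R a b (x, 0) = R' a b (x, 0)) → R a b = R' a b)
    (hfaith₂ : ∀ a b, (∀ y : V₂, R a b (0, y) = R' a b (0, y)) → R a b = R' a b)
    (hagree : ∀ (x : V₁) (y : V₂), R (x, 0) (0, y) = R' (x, 0) (0, y)) : R = R' := by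
  have hagree' : ∀ (x : V₁) (y : V₂), R (0, y) (x, 0) = R' (0, y) (x, 0) := fun x y => by
    rw [hR.antisymm, hR'.antisymm, hagree]
  have h₁₁ : ∀ x t : V₁, R (x, 0) (t, 0) = R' (x, 0) (t, 0) := fun x t => hfaith₂ _ _ fun y => by
    have h := hR.apply_sub_apply_swap (0, y) (x, 0) (t, 0)
    rw [hagree', hagree', hR'.apply_sub_apply_swap] at h
    exact (neg_inj.mp h).symm
  have h₂₂ : ∀ y z : V₂, R (0, y) (0, z) = R' (0, y) (0, z) := fun y z => hfaith₁ _ _ fun x => by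
    have h := hR.apply_sub_apply_swap (x, 0) (0, y) (0, z)
    rw [hagree, hagree, hR'.apply_sub_apply_swap] at h
    exact (neg_inj.mp h).symm
  have hsplit : ∀ a : V₁ × V₂, a = (a.1, 0) + (0, a.2) := fun a => by simp
  refine LinearMap.ext₂ fun a b => ?_
  rw [hsplit a, hsplit b]
  simp only [map_add, LinearMap.add_apply, h₁₁, h₂₂, hagree, hagree']

end IsFormalCurvature

end

theorem stmt_1_general (V₁ V₂ : Type*) [AddCommGroup V₁] [Module ℝ V₁]
    [AddCommGroup V₂] [Module ℝ V₂]
    (g : LieSubalgebra ℝ (Module.End ℝ (V₁ × V₂)))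
    (hpres₁ : ∀ A ∈ g, ∀ x : V₁, (A (x, 0)).2 = 0)
    (hpres₂ : ∀ A ∈ g, ∀ y : V₂, (A (0, y)).1 = 0)
    (hfaith₁ : ∀ A ∈ g, (∀ x : V₁, A (x, 0) = 0) → A = 0)
    (hfaith₂ : ∀ A ∈ g, (∀ y : V₂, A (0, y) = 0) → A = 0)
    (R R' : (V₁ × V₂) →ₗ[ℝ] (V₁ × V₂) →ₗ[ℝ] Module.End ℝ (V₁ × V₂))
    (hval : ∀ a b, R a b ∈ g) (hval' : ∀ a b, R' a b ∈ g)
    (halt : ∀ a b, R a b = - R b a) (halt' : ∀ a b, R' a b = - R' b a)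
    (hBianchi : ∀ a b c, R a b c + R b c a + R c a b = 0)
    (hBianchi' : ∀ a b c, R' a b c + R' b c a + R' c a b = 0)
    (hagree : ∀ (x : V₁) (y' : V₂), R (x, 0) (0, y') = R' (x, 0) (0, y')) :
    R = R' ∧
    (∀ (x : V₁) (y' z' : V₂),
      R (x, 0) (0, y') (0, z') = R (x, 0) (0, z') (0, y')) ∧
    (∀ (x t : V₁) (y' : V₂),
      R (x, 0) (0, y') (t, 0) = R (t, 0) (0, y') (x, 0)) := by
  have hR : IsFormalCurvature R := ⟨halt, hBianchi⟩
  have hR' : IsFormalCurvature R' := ⟨halt', hBianchi'⟩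
  have hRpres₁ : ∀ a b (x : V₁), (R a b (x, 0)).2 = 0 := fun a b => hpres₁ _ (hval a b)
  have hRpres₂ : ∀ a b (y : V₂), (R a b (0, y)).1 = 0 := fun a b => hpres₂ _ (hval a b)
  have hdiff_mem : ∀ a b, R a b - R' a b ∈ g := fun a b => sub_mem (hval a b) (hval' a b)
  refine ⟨hR.eq_of_apply_inl_inr_eq hR'
      (fun a b h => sub_eq_zero.mp <| hfaith₁ _ (hdiff_mem a b) fun x => sub_eq_zero.mpr (h x))
      (fun a b h => sub_eq_zero.mp <| hfaith₂ _ (hdiff_mem a b) fun y => sub_eq_zero.mpr (h y))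
      hagree,
    hR.apply_inl_inr_inr_comm hRpres₁ hRpres₂,
    hR.apply_inl_inr_inl_comm hRpres₁ hRpres₂⟩

theorem stmt_1 (V₁ V₂ : Type*) [AddCommGroup V₁] [Module ℝ V₁]
    [AddCommGroup V₂] [Module ℝ V₂]
    [FiniteDimensional ℝ V₁] [FiniteDimensional ℝ V₂]
    (g : LieSubalgebra ℝ (Module.End ℝ (V₁ × V₂)))
    (hpres₁ : ∀ A ∈ g, ∀ x : V₁, (A (x, 0)).2 = 0)
    (hpres₂ : ∀ A ∈ g, ∀ y : V₂, (A (0, y)).1 = 0)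
    (hfaith₁ : ∀ A ∈ g, (∀ x : V₁, A (x, 0) = 0) → A = 0)
    (hfaith₂ : ∀ A ∈ g, (∀ y : V₂, A (0, y) = 0) → A = 0)
    (R R' : (V₁ × V₂) →ₗ[ℝ] (V₁ × V₂) →ₗ[ℝ] Module.End ℝ (V₁ × V₂))
    (hval : ∀ a b, R a b ∈ g) (hval' : ∀ a b, R' a b ∈ g)
    (halt : ∀ a b, R a b = - R b a) (halt' : ∀ a b, R' a b = - R' b a)
    (hBianchi : ∀ a b c, R a b c + R b c a + R c a b = 0)
    (hBianchi' : ∀ a b c, R' a b c + R' b c a + R' c a b = 0)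
    (hagree : ∀ (x : V₁) (y' : V₂), R (x, 0) (0, y') = R' (x, 0) (0, y')) :
    R = R' ∧
    (∀ (x : V₁) (y' z' : V₂),
      R (x, 0) (0, y') (0, z') = R (x, 0) (0, z') (0, y')) ∧
    (∀ (x t : V₁) (y' : V₂),
      R (x, 0) (0, y') (t, 0) = R (t, 0) (0, y') (x, 0)) :=
  stmt_1_general V₁ V₂ g hpres₁ hpres₂ hfaith₁ hfaith₂ R R' hval hval' halt halt' hBianchi hBianchi'
    hagree
end

section
/- Let V be a finite-dimensional real vector space and g ⊆ gl(V). Suppose R : V × V* → g is a bilinear map such that, extending R to (V ⊕ V*)² by R|_{V×V} = 0, R|_{V*×V*} = 0 and antisymmetry, the extension satisfies the first Bianchi identity for the action of g on V ⊕ V* (with A ∈ g acting by (Ax, -u∘A)). Then the tensor r defined by r(x, y, z', t') := t'(R(x,z')y) for x,y ∈ V and z',t' ∈ V* is symmetric in (x,y) and symmetric in (z',t'); that is, r ∈ S²(V*) ⊗ S²(V). -/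
/-!
Each symmetry is one component of the Bianchi identity on a suitable triple: the
`V`-component on `(x, y, z')` gives `R(y,z')x = R(x,z')y`, and the `V*`-component on
`(x, z', t')`, evaluated at `y`, gives `t'(R(x,z')y) = z'(R(x,t')y)`. All other terms
vanish because `R` is zero on `V × V` and on `V* × V*`.
-/

attribute [local instance 100] LieRing.ofAssociativeRing

namespace Curvature

variable {K V : Type*} [CommRing K] [AddCommGroup V] [Module K V]

def extend (R : V →ₗ[K] Module.Dual K V →ₗ[K] Module.End K V) (a b : V × Module.Dual K V) :
    Module.End K V :=
  R a.1 b.2 - R b.1 a.2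

def sumAct (A : Module.End K V) (c : V × Module.Dual K V) : V × Module.Dual K V :=
  (A c.1, -(c.2.comp A))

def FirstBianchi (R : V →ₗ[K] Module.Dual K V →ₗ[K] Module.End K V) : Prop :=
  ∀ a b c : V × Module.Dual K V,
    sumAct (extend R a b) c + sumAct (extend R b c) a + sumAct (extend R c a) b = 0

variable {R : V →ₗ[K] Module.Dual K V →ₗ[K] Module.End K V}

theorem FirstBianchi.apply_comm (h : FirstBianchi R) (x y : V) (z' : Module.Dual K V) :
    R x z' y = R y z' x := by
  have hV := congrArg Prod.fst (h (x, 0) (y, 0) (0, z'))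
  simp only [extend, sumAct, Prod.fst_add, map_zero, sub_zero, zero_sub, LinearMap.neg_apply,
    zero_add, Prod.fst_zero] at hV
  exact (add_neg_eq_zero.mp hV).symm

theorem FirstBianchi.dual_apply_comm (h : FirstBianchi R) (x y : V) (z' t' : Module.Dual K V) :
    t' (R x z' y) = z' (R x t' y) := by
  have hVdual := congrArg (fun a => a.2 y) (h (x, 0) (0, z') (0, t'))
  simp only [extend, sumAct, Prod.snd_add, map_zero, LinearMap.zero_apply, sub_zero, zero_sub,
    LinearMap.comp_neg, neg_neg, LinearMap.comp_zero, neg_zero, add_zero,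
    LinearMap.add_apply, LinearMap.neg_apply, LinearMap.comp_apply, Prod.snd_zero] at hVdual
  exact neg_add_eq_zero.mp hVdual

end Curvature

open Curvature in
theorem stmt_5_general (V : Type*) [AddCommGroup V] [Module ℝ V]
    (R : V →ₗ[ℝ] Module.Dual ℝ V →ₗ[ℝ] Module.End ℝ V)
    (hBianchi : ∀ a b c : V × Module.Dual ℝ V,
      (((R a.1 b.2 - R b.1 a.2) c.1, -(c.2.comp (R a.1 b.2 - R b.1 a.2))) :
        V × Module.Dual ℝ V)
      + ((R b.1 c.2 - R c.1 b.2) a.1, -(a.2.comp (R b.1 c.2 - R c.1 b.2)))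
      + ((R c.1 a.2 - R a.1 c.2) b.1, -(b.2.comp (R c.1 a.2 - R a.1 c.2))) = 0) :
    (∀ (x y : V) (z' t' : Module.Dual ℝ V), t' (R x z' y) = t' (R y z' x)) ∧
    (∀ (x y : V) (z' t' : Module.Dual ℝ V), t' (R x z' y) = z' (R x t' y)) := by
  have h : FirstBianchi R := hBianchi
  exact ⟨fun x y z' t' => by rw [h.apply_comm], fun x y z' t' => h.dual_apply_comm x y z' t'⟩

theorem stmt_5 (V : Type*) [AddCommGroup V] [Module ℝ V] [FiniteDimensional ℝ V]
    (g : LieSubalgebra ℝ (Module.End ℝ V))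
    (R : V →ₗ[ℝ] Module.Dual ℝ V →ₗ[ℝ] Module.End ℝ V)
    (hval : ∀ x u, R x u ∈ g)
    (hBianchi : ∀ a b c : V × Module.Dual ℝ V,
      (((R a.1 b.2 - R b.1 a.2) c.1, -(c.2.comp (R a.1 b.2 - R b.1 a.2))) :
        V × Module.Dual ℝ V)
      + ((R b.1 c.2 - R c.1 b.2) a.1, -(a.2.comp (R b.1 c.2 - R c.1 b.2)))
      + ((R c.1 a.2 - R a.1 c.2) b.1, -(b.2.comp (R c.1 a.2 - R a.1 c.2))) = 0) :
    (∀ (x y : V) (z' t' : Module.Dual ℝ V), t' (R x z' y) = t' (R y z' x)) ∧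
    (∀ (x y : V) (z' t' : Module.Dual ℝ V), t' (R x z' y) = z' (R x t' y)) :=
  stmt_5_general V R hBianchi
end

section
/- Let V₁ be a finite-dimensional real vector space and g ⊆ gl(V₁) a Lie subalgebra, acting diagonally on V₁ ⊕ V₁ (equivalently V₁ ⊗ ℝ²). Let Φ : V₁ → V₁ denote the identification of the first summand with the second, a g-equivariant isomorphism. If R : (V₁ ⊕ V₁)² → g is an alternating bilinear formal curvature tensor satisfying the first Bianchi identity and also R(x, Φ(y))Φ(z) = Φ(R(x, Φ(y))z) for x,y,z in the first copy of V₁ (equivariance forced by Φ), then the trilinear map T(x,y,z) := R((x,0),(0,y))·z on V₁ is totally symmetric: T ∈ S³(V₁*) ⊗ V₁. -/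
attribute [local instance 100] LieRing.ofAssociativeRing

/-! Only the Bianchi identity on triples with two vectors in one summand and one in the other is
needed. On the first components of `(x,0), (y,0), (0,z)` it makes `T` symmetric in its first and
third arguments, on the second components of `(x,0), (0,y), (0,z)` symmetric in its last two; in
both cases one of the three terms vanishes because `R` acts on a zero component, and antisymmetry
of `R` turns the remaining two into a difference. The two transpositions generate `S₃`. -/

section MixedCurvature

variable {K V : Type*} [CommSemiring K] [AddCommGroup V] [Module K V]
  {R : (V × V) →ₗ[K] (V × V) →ₗ[K] Module.End K V}

theorem mixed_curvature_comm_first_third (halt : ∀ a b, R a b = - R b a)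
    (hBianchi : ∀ a b c : V × V,
      ((R a b c.1, R a b c.2) : V × V) + (R b c a.1, R b c a.2) + (R c a b.1, R c a b.2) = 0)
    (x y z : V) : R (y, 0) (0, z) x = R (x, 0) (0, z) y := by
  have h := congrArg Prod.fst (hBianchi (x, 0) (y, 0) (0, z))
  rw [halt (0, z)] at h
  simpa [sub_eq_zero, ← sub_eq_add_neg] using h

theorem mixed_curvature_comm_last_two (halt : ∀ a b, R a b = - R b a)
    (hBianchi : ∀ a b c : V × V,
      ((R a b c.1, R a b c.2) : V × V) + (R b c a.1, R b c a.2) + (R c a b.1, R c a b.2) = 0)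
    (x y z : V) : R (x, 0) (0, y) z = R (x, 0) (0, z) y := by
  have h := congrArg Prod.snd (hBianchi (x, 0) (0, y) (0, z))
  rw [halt (0, z)] at h
  simpa [sub_eq_zero, ← sub_eq_add_neg] using h

theorem mixed_curvature_comm_first_two (halt : ∀ a b, R a b = - R b a)
    (hBianchi : ∀ a b c : V × V,
      ((R a b c.1, R a b c.2) : V × V) + (R b c a.1, R b c a.2) + (R c a b.1, R c a b.2) = 0)
    (x y z : V) : R (x, 0) (0, y) z = R (y, 0) (0, x) z :=
  calc R (x, 0) (0, y) z = R (z, 0) (0, y) x := mixed_curvature_comm_first_third halt hBianchi z x y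
    _ = R (z, 0) (0, x) y := mixed_curvature_comm_last_two halt hBianchi z y x
    _ = R (y, 0) (0, x) z := mixed_curvature_comm_first_third halt hBianchi y z x

end MixedCurvature

theorem stmt_6_general (V₁ : Type*) [AddCommGroup V₁] [Module ℝ V₁]
    (R : (V₁ × V₁) →ₗ[ℝ] (V₁ × V₁) →ₗ[ℝ] Module.End ℝ V₁)
    (halt : ∀ a b, R a b = - R b a)
    (hBianchi : ∀ a b c : V₁ × V₁,
      ((R a b c.1, R a b c.2) : V₁ × V₁) + (R b c a.1, R b c a.2)
        + (R c a b.1, R c a b.2) = 0) :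
    (∀ x y z : V₁, R (x, 0) (0, y) z = R (y, 0) (0, x) z) ∧
    (∀ x y z : V₁, R (x, 0) (0, y) z = R (x, 0) (0, z) y) :=
  ⟨mixed_curvature_comm_first_two halt hBianchi, mixed_curvature_comm_last_two halt hBianchi⟩

theorem stmt_6 (V₁ : Type*) [AddCommGroup V₁] [Module ℝ V₁] [FiniteDimensional ℝ V₁]
    (g : LieSubalgebra ℝ (Module.End ℝ V₁))
    (R : (V₁ × V₁) →ₗ[ℝ] (V₁ × V₁) →ₗ[ℝ] Module.End ℝ V₁)
    (hval : ∀ a b, R a b ∈ g)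
    (halt : ∀ a b, R a b = - R b a)
    (hBianchi : ∀ a b c : V₁ × V₁,
      ((R a b c.1, R a b c.2) : V₁ × V₁) + (R b c a.1, R b c a.2)
        + (R c a b.1, R c a b.2) = 0)
    (hΦ : ∀ x y z : V₁,
      ((0 : V₁), R (x, 0) (0, y) z) = ((0 : V₁), R (x, 0) (0, y) z)) :
    (∀ x y z : V₁, R (x, 0) (0, y) z = R (y, 0) (0, x) z) ∧
    (∀ x y z : V₁, R (x, 0) (0, y) z = R (x, 0) (0, z) y) :=
  stmt_6_general V₁ R halt hBianchi
end

section
/- Let V₁ be a finite-dimensional real vector space, g ⊆ gl(V₁) a Lie subalgebra acting faithfully, with g acting diagonally on V₁ ⊕ V₁. If R : (V₁⊕V₁)² → g is an alternating bilinear map satisfying the first Bianchi identity (with elements of g acting diagonally), then R vanishes on the first summand and on the second summand: R((x,0),(y,0)) = 0 and R((0,x),(0,y)) = 0 for all x,y ∈ V₁. -/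
attribute [local instance 100] LieRing.ofAssociativeRing

section DiagonalBianchi

variable {K V : Type*} [CommSemiring K] [AddCommMonoid V] [Module K V]
  (R : (V × V) →ₗ[K] (V × V) →ₗ[K] Module.End K V)

/- Evaluate the Bianchi identity at a third vector from the other summand and read off the
other coordinate: the two cyclic terms apply an endomorphism to a zero component. -/

theorem apply_inl_inl_eq_zero_of_bianchi
    (hBianchi : ∀ a b c : V × V,
      ((R a b c.1, R a b c.2) : V × V) + (R b c a.1, R b c a.2) + (R c a b.1, R c a b.2) = 0)
    (x y : V) : R (x, 0) (y, 0) = 0 := by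
  ext z
  simpa using congrArg Prod.snd (hBianchi (x, 0) (y, 0) (0, z))

theorem apply_inr_inr_eq_zero_of_bianchi
    (hBianchi : ∀ a b c : V × V,
      ((R a b c.1, R a b c.2) : V × V) + (R b c a.1, R b c a.2) + (R c a b.1, R c a b.2) = 0)
    (x y : V) : R (0, x) (0, y) = 0 := by
  ext z
  simpa using congrArg Prod.fst (hBianchi (0, x) (0, y) (z, 0))

end DiagonalBianchi

theorem stmt_7_general (V₁ : Type*) [AddCommGroup V₁] [Module ℝ V₁]
    (R : (V₁ × V₁) →ₗ[ℝ] (V₁ × V₁) →ₗ[ℝ] Module.End ℝ V₁)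
    (hBianchi : ∀ a b c : V₁ × V₁,
      ((R a b c.1, R a b c.2) : V₁ × V₁) + (R b c a.1, R b c a.2)
        + (R c a b.1, R c a b.2) = 0) :
    (∀ x y : V₁, R (x, 0) (y, 0) = 0) ∧ (∀ x y : V₁, R (0, x) (0, y) = 0) :=
  ⟨apply_inl_inl_eq_zero_of_bianchi R hBianchi, apply_inr_inr_eq_zero_of_bianchi R hBianchi⟩

theorem stmt_7 (V₁ : Type*) [AddCommGroup V₁] [Module ℝ V₁] [FiniteDimensional ℝ V₁]
    (g : LieSubalgebra ℝ (Module.End ℝ V₁))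
    (R : (V₁ × V₁) →ₗ[ℝ] (V₁ × V₁) →ₗ[ℝ] Module.End ℝ V₁)
    (hval : ∀ a b, R a b ∈ g)
    (halt : ∀ a b, R a b = - R b a)
    (hBianchi : ∀ a b c : V₁ × V₁,
      ((R a b c.1, R a b c.2) : V₁ × V₁) + (R b c a.1, R b c a.2)
        + (R c a b.1, R c a b.2) = 0) :
    (∀ x y : V₁, R (x, 0) (y, 0) = 0) ∧ (∀ x y : V₁, R (0, x) (0, y) = 0) :=
  stmt_7_general V₁ R hBianchi
end

section
/- Define g^(2) := (S³(V*) ⊗ V) ∩ (V* ⊗ V* ⊗ g) for a Lie subalgebra g ⊆ gl(V), i.e. the space of totally symmetric trilinear maps T : V³ → V such that T(x,y,·) ∈ g for all x,y ∈ V. If g is one of the one-dimensional Lie subalgebras of gl(2,ℝ) spanned by a single endomorphism of rank-related type so(2) = span{(0,-1;1,0)}, so(1,1) = span{(1,0;0,-1)}, the homotheties span{(1,0;0,1)}, span{(1,0;0,λ)} for λ ≠ -1,0,1, co(2)_λ = span{(1,-λ;λ,1)} for λ ≠ 0, or span{(1,1;0,1)}, then the space spanned by {T(x,y,·) : T ∈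 g^(2), x,y ∈ V} is a proper subspace of g (in fact zero), so g cannot satisfy the first Berger criterion for holonomy of type V ⊗ ℝ². -/
open Module Submodule

section

variable {R V ι : Type*} [CommRing R] [AddCommGroup V] [Module R V] [Nontrivial ι]

/-- If `φ (b i) = c i • f`, symmetry and injectivity of `f` give `c i • b j = c j • b i`, which
forces `c i = 0` for any `j ≠ i`. -/
theorem LinearMap.eq_zero_of_apply_comm_of_mem_span_singleton (b : Basis ι R V) {f : End R V}
    (hf : Function.Injective f) (φ : V →ₗ[R] End R V) (hcomm : ∀ y z, φ y z = φ z y)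
    (hmem : ∀ y, φ y ∈ span R {f}) : φ = 0 := by
  choose c hc using fun i ↦ mem_span_singleton.mp (hmem (b i))
  have hc_zero (i : ι) : c i = 0 := by
    obtain ⟨j, hji⟩ := exists_ne i
    have hf_eq : f (c i • b j) = f (c j • b i) := by
      simpa only [← hc, LinearMap.smul_apply, map_smul] using hcomm (b i) (b j)
    have hsingle := congrArg b.repr (hf hf_eq)
    simpa [Finsupp.single_apply, hji, hji.symm] using congrArg (· j) hsingle
  exact b.ext fun i ↦ by rw [← hc i, hc_zero i, zero_smul, LinearMap.zero_apply]

theorem LinearMap.eq_zero_of_apply_comm_of_mem_span_singleton₂ (b : Basis ι R V) {f : End R V}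
    (hf : Function.Injective f) (T : V →ₗ[R] V →ₗ[R] End R V)
    (hcomm : ∀ x y z, T x y z = T x z y) (hmem : ∀ x y, T x y ∈ span R {f}) : T = 0 :=
  LinearMap.ext fun x ↦
    eq_zero_of_apply_comm_of_mem_span_singleton b hf (T x) (hcomm x) (hmem x)

end

theorem stmt_8 (A : Matrix (Fin 2) (Fin 2) ℝ)
    (hA : A = !![0,-1;1,0] ∨ A = !![1,0;0,-1] ∨ A = !![1,0;0,1] ∨
      (∃ l : ℝ, l ≠ -1 ∧ l ≠ 0 ∧ l ≠ 1 ∧ A = !![1,0;0,l]) ∨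
      (∃ l : ℝ, l ≠ 0 ∧ A = !![1,-l;l,1]) ∨ A = !![1,1;0,1]) :
    (∀ T : (Fin 2 → ℝ) →ₗ[ℝ] (Fin 2 → ℝ) →ₗ[ℝ] Module.End ℝ (Fin 2 → ℝ),
      (∀ x y, T x y = T y x) → (∀ x y z, T x y z = T x z y) →
      (∀ x y, T x y ∈ Submodule.span ℝ {Matrix.toLin' A}) → T = 0) ∧
    Submodule.span ℝ {B : Module.End ℝ (Fin 2 → ℝ) |
        ∃ T : (Fin 2 → ℝ) →ₗ[ℝ] (Fin 2 → ℝ) →ₗ[ℝ] Module.End ℝ (Fin 2 → ℝ),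
          (∀ x y, T x y = T y x) ∧ (∀ x y z, T x y z = T x z y) ∧
          (∀ x y, T x y ∈ Submodule.span ℝ {Matrix.toLin' A}) ∧
          ∃ x y, B = T x y}
      < Submodule.span ℝ {Matrix.toLin' A} := by
  have hdet : A.det ≠ 0 := by
    rcases hA with rfl | rfl | rfl | ⟨l, -, hl, -, rfl⟩ | ⟨l, -, rfl⟩ | rfl <;>
      norm_num [Matrix.det_fin_two_of] <;> first | assumption | nlinarith [sq_nonneg l]
  have hinj : Function.Injective (Matrix.toLin' A) :=
    Matrix.mulVec_injective_of_isUnit ((Matrix.isUnit_iff_isUnit_det A).mpr hdet.isUnit)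
  have hT_zero := fun T (_ : ∀ x y, T x y = T y x) ↦
    LinearMap.eq_zero_of_apply_comm_of_mem_span_singleton₂ (Pi.basisFun ℝ (Fin 2)) hinj T
  refine ⟨hT_zero, ?_⟩
  have hvalues : span ℝ {B : Module.End ℝ (Fin 2 → ℝ) |
        ∃ T : (Fin 2 → ℝ) →ₗ[ℝ] (Fin 2 → ℝ) →ₗ[ℝ] Module.End ℝ (Fin 2 → ℝ),
          (∀ x y, T x y = T y x) ∧ (∀ x y z, T x y z = T x z y) ∧
          (∀ x y, T x y ∈ span ℝ {Matrix.toLin' A}) ∧ ∃ x y, B = T x y} = ⊥ := by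
    rw [span_eq_bot]
    rintro B ⟨T, hsymm, hcomm, hmem, x, y, rfl⟩
    rw [hT_zero T hsymm hcomm hmem, LinearMap.zero_apply, LinearMap.zero_apply]
  rw [hvalues, bot_lt_iff_ne_bot, Ne, span_singleton_eq_bot]
  exact LinearMap.ne_zero_of_injective hinj
end

section
/- For V = ℝ² and g = span{(0,1;0,0)} ⊆ gl(2,ℝ) (the Lie algebra of the Heisenberg-type group He), the space g^(2) = (S³(V*) ⊗ V) ∩ (V*⊗V*⊗g) of totally symmetric trilinear maps T : V³ → V with T(x,y,·) ∈ g for all x,y is nonzero, and g is spanned by the values {T(x,y,·) : T ∈ g^(2), x,y ∈ V}. -/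
noncomputable def myA : Module.End ℝ (Fin 2 → ℝ) := Matrix.toLin' !![0,1;0,0]

noncomputable def myT : (Fin 2 → ℝ) →ₗ[ℝ] (Fin 2 → ℝ) →ₗ[ℝ] Module.End ℝ (Fin 2 → ℝ) :=
  LinearMap.mk₂ ℝ (fun x y => (x 1 * y 1) • myA)
    (by intro x x' y; simp [add_mul, add_smul])
    (by intro c x y; simp [mul_assoc, mul_smul])
    (by intro x y y'; simp [mul_add, add_smul])
    (by intro c x y; simp [mul_smul, mul_left_comm])

lemma myA_apply (z : Fin 2 → ℝ) : myA z = ![z 1, 0] := by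
  funext i
  fin_cases i <;>
    simp [myA, Matrix.toLin'_apply, Matrix.mulVec, dotProduct, Fin.sum_univ_two]

theorem stmt_9
    (g : Submodule ℝ (Module.End ℝ (Fin 2 → ℝ)))
    (hg : g = Submodule.span ℝ {Matrix.toLin' !![0,1;0,0]}) :
    (∃ T : (Fin 2 → ℝ) →ₗ[ℝ] (Fin 2 → ℝ) →ₗ[ℝ] Module.End ℝ (Fin 2 → ℝ),
      (∀ x y, T x y = T y x) ∧ (∀ x y z, T x y z = T x z y) ∧
      (∀ x y, T x y ∈ g) ∧ T ≠ 0) ∧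
    Submodule.span ℝ {B : Module.End ℝ (Fin 2 → ℝ) |
        ∃ T : (Fin 2 → ℝ) →ₗ[ℝ] (Fin 2 → ℝ) →ₗ[ℝ] Module.End ℝ (Fin 2 → ℝ),
          (∀ x y, T x y = T y x) ∧ (∀ x y z, T x y z = T x z y) ∧
          (∀ x y, T x y ∈ g) ∧ ∃ x y, B = T x y} = g := by
  subst hg
  have hmem : ∀ x y : Fin 2 → ℝ, myT x y ∈ Submodule.span ℝ {Matrix.toLin' !![(0:ℝ),1;0,0]} := by
    intro x y
    have : myT x y = (x 1 * y 1) • myA := rfl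
    rw [this]
    exact Submodule.smul_mem _ _ (Submodule.subset_span rfl)
  have hsym1 : ∀ x y, myT x y = myT y x := by
    intro x y
    show (x 1 * y 1) • myA = (y 1 * x 1) • myA
    rw [mul_comm]
  have hsym2 : ∀ x y z, myT x y z = myT x z y := by
    intro x y z
    show (x 1 * y 1) • myA z = (x 1 * z 1) • myA y
    rw [myA_apply, myA_apply]
    funext i
    fin_cases i <;> simp <;> ring
  have hne : myT ≠ 0 := by
    intro h
    have h1 : myT ![0,1] ![0,1] ![0,1] = 0 := by rw [h]; rfl
    have h2 : myT ![0,1] ![0,1] ![0,1] = ![1, 0] := by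
      show ((![0,1] : Fin 2 → ℝ) 1 * (![0,1] : Fin 2 → ℝ) 1) • myA ![0,1] = ![1,0]
      rw [myA_apply]; norm_num
    rw [h2] at h1
    have := congrFun h1 0
    norm_num at this
  have hval : myT ![0,1] ![0,1] = Matrix.toLin' !![(0:ℝ),1;0,0] := by
    show ((![0,1] : Fin 2 → ℝ) 1 * (![0,1] : Fin 2 → ℝ) 1) • myA = _
    norm_num
    rfl
  constructor
  · exact ⟨myT, hsym1, hsym2, hmem, hne⟩
  · apply le_antisymm
    · rw [Submodule.span_le]
      rintro B ⟨T, _, _, hT, x, y, rfl⟩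
      exact hT x y
    · rw [Submodule.span_le]
      rintro B rfl
      exact Submodule.subset_span ⟨myT, hsym1, hsym2, hmem, ![0,1], ![0,1], hval.symm⟩
end

section
/- For V = ℝ² and g = sl(2,ℝ), the space g^(2) of totally symmetric trilinear maps T : V³ → V with T(x,y,·) ∈ sl(2,ℝ) for all x,y is nonzero, and sl(2,ℝ) equals the span of {T(x,y,·) : T ∈ g^(2), x,y ∈ V}. -/
noncomputable section Aux11

private def bil (i j : Fin 2) : (Fin 2 → ℝ) →ₗ[ℝ] (Fin 2 → ℝ) →ₗ[ℝ] ℝ :=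
  (LinearMap.mul ℝ ℝ).compl₁₂ (LinearMap.proj i) (LinearMap.proj j)

@[simp] private lemma bil_apply (i j : Fin 2) (x y : Fin 2 → ℝ) : bil i j x y = x i * y j := rfl

private def sm (f : (Fin 2 → ℝ) →ₗ[ℝ] (Fin 2 → ℝ) →ₗ[ℝ] ℝ) (A : Module.End ℝ (Fin 2 → ℝ)) :
    (Fin 2 → ℝ) →ₗ[ℝ] (Fin 2 → ℝ) →ₗ[ℝ] Module.End ℝ (Fin 2 → ℝ) :=
  f.compr₂ (LinearMap.toSpanSingleton ℝ _ A)

@[simp] private lemma sm_apply (f) (A : Module.End ℝ (Fin 2 → ℝ)) (x y) :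
    sm f A x y = f x y • A := rfl

private def Dl : Module.End ℝ (Fin 2 → ℝ) := Matrix.toLin' !![(1:ℝ),0;0,-1]
private def E12 : Module.End ℝ (Fin 2 → ℝ) := Matrix.toLin' !![(0:ℝ),1;0,0]
private def E21 : Module.End ℝ (Fin 2 → ℝ) := Matrix.toLin' !![(0:ℝ),0;1,0]

private lemma trace_toLin'2 (M : Matrix (Fin 2) (Fin 2) ℝ) :
    LinearMap.trace ℝ (Fin 2 → ℝ) (Matrix.toLin' M) = M.trace := by
  rw [LinearMap.trace_eq_matrix_trace ℝ (Pi.basisFun ℝ (Fin 2)),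
    LinearMap.toMatrix_eq_toMatrix', LinearMap.toMatrix'_toLin']

@[simp] private lemma trace_Dl : LinearMap.trace ℝ (Fin 2 → ℝ) Dl = 0 := by
  simp [Dl, trace_toLin'2, Matrix.trace, Fin.sum_univ_two]
@[simp] private lemma trace_E12 : LinearMap.trace ℝ (Fin 2 → ℝ) E12 = 0 := by
  simp [E12, trace_toLin'2, Matrix.trace, Fin.sum_univ_two]
@[simp] private lemma trace_E21 : LinearMap.trace ℝ (Fin 2 → ℝ) E21 = 0 := by
  simp [E21, trace_toLin'2, Matrix.trace, Fin.sum_univ_two]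

private def T1 := sm (bil 0 0) E21
private def T2 := sm (bil 1 1) E12
private def T3 : (Fin 2 → ℝ) →ₗ[ℝ] (Fin 2 → ℝ) →ₗ[ℝ] Module.End ℝ (Fin 2 → ℝ) :=
  sm (bil 0 0) Dl + sm (bil 0 1) (-E21) + sm (bil 1 0) (-E21)

private lemma T1_symm (x y : Fin 2 → ℝ) : T1 x y = T1 y x := by
  simp [T1, mul_comm]

private lemma T2_symm (x y : Fin 2 → ℝ) : T2 x y = T2 y x := by
  simp [T2, mul_comm]

private lemma T3_symm (x y : Fin 2 → ℝ) : T3 x y = T3 y x := by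
  simp [T3, mul_comm]
  abel

private lemma T1_symm23 (x y z : Fin 2 → ℝ) : T1 x y z = T1 x z y := by
  funext i
  fin_cases i <;>
    simp [T1, E21, Matrix.toLin'_apply, Matrix.mulVec, dotProduct,
      Fin.sum_univ_two] <;> ring

private lemma T2_symm23 (x y z : Fin 2 → ℝ) : T2 x y z = T2 x z y := by
  funext i
  fin_cases i <;>
    simp [T2, E12, Matrix.toLin'_apply, Matrix.mulVec, dotProduct,
      Fin.sum_univ_two] <;> ring

private lemma T3_symm23 (x y z : Fin 2 → ℝ) : T3 x y z = T3 x z y := by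
  funext i
  fin_cases i <;>
    simp [T3, Dl, E21, Matrix.toLin'_apply, Matrix.mulVec, dotProduct,
      Fin.sum_univ_two] <;> ring

private lemma T1_trace (x y : Fin 2 → ℝ) :
    LinearMap.trace ℝ (Fin 2 → ℝ) (T1 x y) = 0 := by simp [T1]

private lemma T2_trace (x y : Fin 2 → ℝ) :
    LinearMap.trace ℝ (Fin 2 → ℝ) (T2 x y) = 0 := by simp [T2]

private lemma T3_trace (x y : Fin 2 → ℝ) :
    LinearMap.trace ℝ (Fin 2 → ℝ) (T3 x y) = 0 := by simp [T3]

private lemma T1_e : T1 ![1,0] ![1,0] = E21 := by simp [T1]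
private lemma T2_e : T2 ![0,1] ![0,1] = E12 := by simp [T2]
private lemma T3_e : T3 ![1,0] ![1,0] = Dl := by simp [T3]

private lemma T1_ne : T1 ≠ 0 := by
  intro h
  have h1 : T1 ![1,0] ![1,0] ![1,0] 1 = 1 := by
    simp [T1, E21, Matrix.toLin'_apply, Matrix.mulVec, dotProduct, Fin.sum_univ_two]
  rw [h] at h1
  simp at h1

end Aux11

theorem stmt_11
    (g : Submodule ℝ (Module.End ℝ (Fin 2 → ℝ)))
    (hg : g = LinearMap.ker (LinearMap.trace ℝ (Fin 2 → ℝ))) :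
    (∃ T : (Fin 2 → ℝ) →ₗ[ℝ] (Fin 2 → ℝ) →ₗ[ℝ] Module.End ℝ (Fin 2 → ℝ),
      (∀ x y, T x y = T y x) ∧ (∀ x y z, T x y z = T x z y) ∧
      (∀ x y, T x y ∈ g) ∧ T ≠ 0) ∧
    Submodule.span ℝ {B : Module.End ℝ (Fin 2 → ℝ) |
        ∃ T : (Fin 2 → ℝ) →ₗ[ℝ] (Fin 2 → ℝ) →ₗ[ℝ] Module.End ℝ (Fin 2 → ℝ),
          (∀ x y, T x y = T y x) ∧ (∀ x y z, T x y z = T x z y) ∧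
          (∀ x y, T x y ∈ g) ∧ ∃ x y, B = T x y} = g := by
  subst hg
  constructor
  · exact ⟨T1, T1_symm, T1_symm23, fun x y => by simp [LinearMap.mem_ker, T1_trace], T1_ne⟩
  · apply le_antisymm
    · rw [Submodule.span_le]
      rintro B ⟨T, -, -, hmem, x, y, rfl⟩
      exact hmem x y
    · intro f hf
      rw [LinearMap.mem_ker] at hf
      set M := LinearMap.toMatrix' f with hM
      have hdec : M = M 0 0 • !![(1:ℝ),0;0,-1] + M 0 1 • !![(0:ℝ),1;0,0]
          + M 1 0 • !![(0:ℝ),0;1,0] := by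
        have htr : M 0 0 + M 1 1 = 0 := by
          have := LinearMap.trace_eq_matrix_trace ℝ (Pi.basisFun ℝ (Fin 2)) f
          rw [LinearMap.toMatrix_eq_toMatrix'] at this
          rw [hf] at this
          simpa [Matrix.trace, Fin.sum_univ_two, hM] using this.symm
        ext i j
        fin_cases i <;> fin_cases j <;> simp <;> linarith
      have hfM : f = M 0 0 • Dl + M 0 1 • E12 + M 1 0 • E21 := by
        have : f = Matrix.toLin' M := (Matrix.toLin'_toMatrix' f).symm
        rw [this]
        conv_lhs => rw [hdec, map_add, map_add, map_smul, map_smul, map_smul]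
        rfl
      rw [hfM]
      have hDl : Dl ∈ Submodule.span ℝ {B : Module.End ℝ (Fin 2 → ℝ) |
          ∃ T : (Fin 2 → ℝ) →ₗ[ℝ] (Fin 2 → ℝ) →ₗ[ℝ] Module.End ℝ (Fin 2 → ℝ),
            (∀ x y, T x y = T y x) ∧ (∀ x y z, T x y z = T x z y) ∧
            (∀ x y, T x y ∈ LinearMap.ker (LinearMap.trace ℝ (Fin 2 → ℝ))) ∧
            ∃ x y, B = T x y} :=
        Submodule.subset_span ⟨T3, T3_symm, T3_symm23,
          fun x y => by simp [LinearMap.mem_ker, T3_trace], ![1,0], ![1,0], T3_e.symm⟩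
      have hE12 : E12 ∈ Submodule.span ℝ {B : Module.End ℝ (Fin 2 → ℝ) |
          ∃ T : (Fin 2 → ℝ) →ₗ[ℝ] (Fin 2 → ℝ) →ₗ[ℝ] Module.End ℝ (Fin 2 → ℝ),
            (∀ x y, T x y = T y x) ∧ (∀ x y z, T x y z = T x z y) ∧
            (∀ x y, T x y ∈ LinearMap.ker (LinearMap.trace ℝ (Fin 2 → ℝ))) ∧
            ∃ x y, B = T x y} :=
        Submodule.subset_span ⟨T2, T2_symm, T2_symm23,
          fun x y => by simp [LinearMap.mem_ker, T2_trace], ![0,1], ![0,1], T2_e.symm⟩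
      have hE21 : E21 ∈ Submodule.span ℝ {B : Module.End ℝ (Fin 2 → ℝ) |
          ∃ T : (Fin 2 → ℝ) →ₗ[ℝ] (Fin 2 → ℝ) →ₗ[ℝ] Module.End ℝ (Fin 2 → ℝ),
            (∀ x y, T x y = T y x) ∧ (∀ x y z, T x y z = T x z y) ∧
            (∀ x y, T x y ∈ LinearMap.ker (LinearMap.trace ℝ (Fin 2 → ℝ))) ∧
            ∃ x y, B = T x y} :=
        Submodule.subset_span ⟨T1, T1_symm, T1_symm23,
          fun x y => by simp [LinearMap.mem_ker, T1_trace], ![1,0], ![1,0], T1_e.symm⟩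
      exact Submodule.add_mem _ (Submodule.add_mem _ (Submodule.smul_mem _ _ hDl)
        (Submodule.smul_mem _ _ hE12)) (Submodule.smul_mem _ _ hE21)
end

section
/- For V = ℝ² identified with ℂ and g = co(2) = {(a,-b;b,a) : a,b ∈ ℝ} (multiplication by complex scalars), the space g^(2) of totally symmetric trilinear maps T : V³ → V with all partial evaluations in g is nonzero (e.g. T given by complex multiplication T(x,y,z) = xyz under V ≅ ℂ), and co(2) is spanned by the evaluations T(x,y,·). -/
/-- Complex multiplication on `ℝ²` as a bilinear map. -/
noncomputable def cmul : (Fin 2 → ℝ) →ₗ[ℝ] (Fin 2 → ℝ) →ₗ[ℝ] (Fin 2 → ℝ) :=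
  LinearMap.mk₂ ℝ (fun v w => ![v 0 * w 0 - v 1 * w 1, v 0 * w 1 + v 1 * w 0])
    (by intro a b w; funext i; fin_cases i <;> simp <;> ring)
    (by intro c a w; funext i; fin_cases i <;> simp <;> ring)
    (by intro a b w; funext i; fin_cases i <;> simp <;> ring)
    (by intro c a w; funext i; fin_cases i <;> simp <;> ring)

lemma cmul_apply (v w : Fin 2 → ℝ) :
    cmul v w = ![v 0 * w 0 - v 1 * w 1, v 0 * w 1 + v 1 * w 0] := rfl

lemma cmul_eq (v : Fin 2 → ℝ) :
    (cmul v : Module.End ℝ (Fin 2 → ℝ)) =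
      v 0 • Matrix.toLin' !![(1:ℝ),0;0,1] + v 1 • Matrix.toLin' !![(0:ℝ),-1;1,0] := by
  apply LinearMap.ext; intro w
  funext i
  fin_cases i <;>
    simp [cmul_apply, Matrix.toLin'_apply, Matrix.mulVec, dotProduct,
      Fin.sum_univ_two] <;> ring

noncomputable def Tc : (Fin 2 → ℝ) →ₗ[ℝ] (Fin 2 → ℝ) →ₗ[ℝ] Module.End ℝ (Fin 2 → ℝ) :=
  cmul.compr₂ cmul

lemma Tc_apply (x y z : Fin 2 → ℝ) : Tc x y z = cmul (cmul x y) z := rfl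

theorem stmt_12
    (g : Submodule ℝ (Module.End ℝ (Fin 2 → ℝ)))
    (hg : g = Submodule.span ℝ
      {Matrix.toLin' !![(1:ℝ),0;0,1], Matrix.toLin' !![(0:ℝ),-1;1,0]}) :
    (∃ T : (Fin 2 → ℝ) →ₗ[ℝ] (Fin 2 → ℝ) →ₗ[ℝ] Module.End ℝ (Fin 2 → ℝ),
      (∀ x y, T x y = T y x) ∧ (∀ x y z, T x y z = T x z y) ∧
      (∀ x y, T x y ∈ g) ∧ T ≠ 0) ∧
    Submodule.span ℝ {B : Module.End ℝ (Fin 2 → ℝ) |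
        ∃ T : (Fin 2 → ℝ) →ₗ[ℝ] (Fin 2 → ℝ) →ₗ[ℝ] Module.End ℝ (Fin 2 → ℝ),
          (∀ x y, T x y = T y x) ∧ (∀ x y z, T x y z = T x z y) ∧
          (∀ x y, T x y ∈ g) ∧ ∃ x y, B = T x y} = g := by
  have hcomm : ∀ x y : Fin 2 → ℝ, cmul x y = cmul y x := by
    intro x y; funext i; fin_cases i <;> simp [cmul_apply] <;> ring
  have hsym2 : ∀ x y z : Fin 2 → ℝ, Tc x y z = Tc x z y := by
    intro x y z
    simp only [Tc_apply, cmul_apply]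
    funext i; fin_cases i <;> simp <;> ring
  have hmem : ∀ x y : Fin 2 → ℝ, Tc x y ∈ g := by
    intro x y
    rw [hg, show (Tc x y : Module.End ℝ (Fin 2 → ℝ)) = cmul (cmul x y) from rfl, cmul_eq]
    exact add_mem
      (Submodule.smul_mem _ _ (Submodule.subset_span (Set.mem_insert _ _)))
      (Submodule.smul_mem _ _ (Submodule.subset_span (Set.mem_insert_iff.mpr
        (Or.inr rfl))))
  have hI : Matrix.toLin' !![(1:ℝ),0;0,1] = Tc ![1,0] ![1,0] := by
    apply LinearMap.ext; intro w
    funext i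
    fin_cases i <;>
      simp [Tc_apply, cmul_apply, Matrix.toLin'_apply, Matrix.mulVec,
        dotProduct, Fin.sum_univ_two]
  have hJ : Matrix.toLin' !![(0:ℝ),-1;1,0] = Tc ![1,0] ![0,1] := by
    apply LinearMap.ext; intro w
    funext i
    fin_cases i <;>
      simp [Tc_apply, cmul_apply, Matrix.toLin'_apply, Matrix.mulVec,
        dotProduct, Fin.sum_univ_two]
  have hprops : (∀ x y, Tc x y = Tc y x) ∧ (∀ x y z, Tc x y z = Tc x z y) ∧
      (∀ x y, Tc x y ∈ g) := by
    refine ⟨fun x y => ?_, hsym2, hmem⟩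
    exact congrArg (fun v => (cmul v : Module.End ℝ (Fin 2 → ℝ))) (hcomm x y)
  constructor
  · refine ⟨Tc, hprops.1, hprops.2.1, hprops.2.2, ?_⟩
    intro h
    have : Tc ![1,0] ![1,0] ![1,0] = 0 := by rw [h]; rfl
    have h0 : (Tc ![1,0] ![1,0] ![1,0]) 0 = 1 := by
      norm_num [Tc_apply, cmul_apply]
    rw [this] at h0
    simp at h0
  · apply le_antisymm
    · rw [Submodule.span_le]
      rintro B ⟨T, _, _, hTg, x, y, rfl⟩
      exact hTg x y
    · intro B hB
      rw [hg] at hB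
      refine Submodule.span_le.mpr ?_ hB
      intro C hC
      rcases hC with hB | hB
      · subst hB
        exact Submodule.subset_span ⟨Tc, hprops.1, hprops.2.1, hprops.2.2,
          ![1,0], ![1,0], hI⟩
      · rw [Set.mem_singleton_iff] at hB; subst hB
        exact Submodule.subset_span ⟨Tc, hprops.1, hprops.2.1, hprops.2.2,
          ![1,0], ![0,1], hJ⟩
end

section
/- Let g ⊆ gl(V) be a Lie subalgebra with first prolongation g^(1) := (V* ⊗ g) ∩ (S²(V*) ⊗ V), and define g_underlined := span{r(x) : x ∈ V, r ∈ g^(1)} ⊆ g. If W ⊆ V is a g-invariant subspace and g_underlined = g, then the induced representation g_{/W} ⊆ gl(V/W) satisfies (g_{/W})_underlined = g_{/W}; i.e., the property of being spanned by evaluations of the first prolongation passes to quotient representations. -/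
attribute [local instance 100] LieRing.ofAssociativeRing

/-! Every element of `g^(1)` is a symmetric bilinear map `r` with each `r x ∈ g` preserving `W`;
symmetry then gives `r w x = r x w ∈ W` for `w ∈ W`, so `r` also vanishes in its first slot
modulo `W` and descends to an element of `(g_{/W})^(1)` whose evaluations are the images of
those of `r`. Hence the evaluations of `(g_{/W})^(1)` contain the image of a spanning set
of `g`, and so span `g_{/W}`. -/

namespace Submodule

variable {R M : Type*} [CommRing R] [AddCommGroup M] [Module R M]

/-- The evaluations `r x` of elements `r ∈ g^(1)`; their span is the paper's underlined `g`. -/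
def prolongationEvals (g : Submodule R (Module.End R M)) : Set (Module.End R M) :=
  {B | ∃ r : M →ₗ[R] Module.End R M, (∀ x y, r x y = r y x) ∧ (∀ x, r x ∈ g) ∧ ∃ x, B = r x}

theorem span_prolongationEvals_le (g : Submodule R (Module.End R M)) :
    span R (prolongationEvals g) ≤ g := by
  rw [span_le]
  rintro _ ⟨r, -, hr, x, rfl⟩
  exact hr x

theorem comap_subtype_span_of_subset {p : Submodule R M} {s : Set M} (hs : s ⊆ p) :
    (span R s).comap p.subtype = span R (p.subtype ⁻¹' s) := by
  conv_lhs => rw [← Set.image_preimage_eq_of_subset (f := p.subtype) (s := s) (by simpa using hs),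
    ← map_span]
  exact comap_map_eq_of_injective p.injective_subtype _

/-- `g_{/W}` in the paper's notation. -/
def quotientEnds (g : Submodule R (Module.End R M)) (W : Submodule R M) :
    Submodule R (Module.End R (M ⧸ W)) :=
  (g.comap (compatibleMaps W W).subtype).map (W.mapQLinear W)

variable {W : Submodule R M}

def descendSymm (r : M →ₗ[R] Module.End R M) (hsym : ∀ x y, r x y = r y x)
    (hW : ∀ x, r x ∈ compatibleMaps W W) : (M ⧸ W) →ₗ[R] Module.End R (M ⧸ W) :=
  W.liftQ ((W.mapQLinear W).comp (r.codRestrict _ hW)) fun w hw ↦ by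
    refine LinearMap.mem_ker.2 (LinearMap.ext fun z ↦ ?_)
    obtain ⟨x, rfl⟩ := Quotient.mk_surjective W z
    change Quotient.mk (r w x) = 0
    rw [Quotient.mk_eq_zero, hsym]
    exact hW x hw

theorem descendSymm_symm (r : M →ₗ[R] Module.End R M) (hsym : ∀ x y, r x y = r y x)
    (hW : ∀ x, r x ∈ compatibleMaps W W) (a b : M ⧸ W) :
    descendSymm r hsym hW a b = descendSymm r hsym hW b a := by
  obtain ⟨x, rfl⟩ := Quotient.mk_surjective W a
  obtain ⟨y, rfl⟩ := Quotient.mk_surjective W b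
  exact congrArg Quotient.mk (hsym x y)

theorem image_prolongationEvals_subset {g : Submodule R (Module.End R M)}
    (hgW : g ≤ compatibleMaps W W) :
    W.mapQLinear W '' ((compatibleMaps W W).subtype ⁻¹' prolongationEvals g) ⊆
      prolongationEvals (quotientEnds g W) := by
  rintro _ ⟨⟨_, _⟩, ⟨r, hsym, hr, x, rfl⟩, rfl⟩
  have hW : ∀ x, r x ∈ compatibleMaps W W := fun x ↦ hgW (hr x)
  refine ⟨descendSymm r hsym hW, descendSymm_symm r hsym hW, fun a ↦ ?_, Quotient.mk x, rfl⟩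
  obtain ⟨y, rfl⟩ := Quotient.mk_surjective W a
  exact ⟨⟨r y, hW y⟩, hr y, rfl⟩

theorem span_prolongationEvals_quotientEnds {g : Submodule R (Module.End R M)}
    (hspan : span R (prolongationEvals g) = g) (hgW : g ≤ compatibleMaps W W) :
    span R (prolongationEvals (quotientEnds g W)) = quotientEnds g W := by
  refine le_antisymm (span_prolongationEvals_le _) ?_
  calc quotientEnds g W
      = span R (W.mapQLinear W '' ((compatibleMaps W W).subtype ⁻¹' prolongationEvals g)) := by
        conv_lhs => rw [quotientEnds, ← hspan]
        rw [comap_subtype_span_of_subset ((subset_span.trans hspan.le).trans hgW), map_span]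
    _ ≤ span R (prolongationEvals (quotientEnds g W)) :=
        span_mono (image_prolongationEvals_subset hgW)

end Submodule

theorem stmt_13_general (V : Type*) [AddCommGroup V] [Module ℝ V]
    (g : LieSubalgebra ℝ (Module.End ℝ V))
    (hspan : Submodule.span ℝ {B : Module.End ℝ V |
        ∃ r : V →ₗ[ℝ] Module.End ℝ V,
          (∀ x y, r x y = r y x) ∧ (∀ x, r x ∈ g) ∧ ∃ x, B = r x}
      = g.toSubmodule)
    (W : Submodule ℝ V) (hW : ∀ A ∈ g, ∀ w ∈ W, A w ∈ W)
    (gQ : Submodule ℝ (Module.End ℝ (V ⧸ W)))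
    (hgQ : gQ = Submodule.map (W.mapQLinear W)
      (Submodule.comap (Submodule.compatibleMaps W W).subtype g.toSubmodule)) :
    Submodule.span ℝ {B : Module.End ℝ (V ⧸ W) |
        ∃ r : (V ⧸ W) →ₗ[ℝ] Module.End ℝ (V ⧸ W),
          (∀ x y, r x y = r y x) ∧ (∀ x, r x ∈ gQ) ∧ ∃ x, B = r x}
      = gQ := by
  subst hgQ
  exact Submodule.span_prolongationEvals_quotientEnds hspan fun A hA w hw ↦ hW A hA w hw

theorem stmt_13 (V : Type*) [AddCommGroup V] [Module ℝ V] [FiniteDimensional ℝ V]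
    (g : LieSubalgebra ℝ (Module.End ℝ V))
    (hspan : Submodule.span ℝ {B : Module.End ℝ V |
        ∃ r : V →ₗ[ℝ] Module.End ℝ V,
          (∀ x y, r x y = r y x) ∧ (∀ x, r x ∈ g) ∧ ∃ x, B = r x}
      = g.toSubmodule)
    (W : Submodule ℝ V) (hW : ∀ A ∈ g, ∀ w ∈ W, A w ∈ W)
    (gQ : Submodule ℝ (Module.End ℝ (V ⧸ W)))
    (hgQ : gQ = Submodule.map (W.mapQLinear W)
      (Submodule.comap (Submodule.compatibleMaps W W).subtype g.toSubmodule)) :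
    Submodule.span ℝ {B : Module.End ℝ (V ⧸ W) |
        ∃ r : (V ⧸ W) →ₗ[ℝ] Module.End ℝ (V ⧸ W),
          (∀ x y, r x y = r y x) ∧ (∀ x, r x ∈ gQ) ∧ ∃ x, B = r x}
      = gQ :=
  stmt_13_general V g hspan W hW gQ hgQ
end

section
/- Let V₁, V₂ be finite-dimensional real vector spaces and g ⊆ gl(V₁ ⊕ V₂) a Lie subalgebra preserving both summands and faithful on each. Suppose R : V₁ × V₂ → g is a bilinear map satisfying R(x,y')z' = R(x,z')y' and R(x,y')t = R(t,y')x for all x,t ∈ V₁ and y',z' ∈ V₂ (elements of g acting on V₁ ⊕ V₂). Then the extension of R to an alternating bilinear map on (V₁ ⊕ V₂)² defined by R̃((x₁,y₁),(x₂,y₂)) := R(x₁,y₂) - R(x₂,y₁) satisfies the first Bianchi identity. -/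
/-! Split every value of an endomorphism of `V₁ × V₂` into its values on the two summands. The
cyclic sum of the `V₁`-parts then cancels in pairs by the symmetry of `R x y'` on `V₁`, and the
cyclic sum of the `V₂`-parts by its symmetry on `V₂`. -/

attribute [local instance 100] LieRing.ofAssociativeRing

theorem map_mk_eq_add {F M N P : Type*} [AddZeroClass M] [AddZeroClass N] [AddZeroClass P]
    [FunLike F (M × N) P] [AddMonoidHomClass F (M × N) P] (f : F) (u : M) (v : N) :
    f (u, v) = f (u, 0) + f (0, v) := by
  rw [← map_add, Prod.mk_add_mk, add_zero, zero_add]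

theorem cyclic_sum_extension_eq_zero {K V₁ V₂ : Type*} [Ring K]
    [AddCommGroup V₁] [Module K V₁] [AddCommGroup V₂] [Module K V₂]
    (R : V₁ → V₂ → Module.End K (V₁ × V₂))
    (hsym₂ : ∀ (x : V₁) (y' z' : V₂), R x y' (0, z') = R x z' (0, y'))
    (hsym₁ : ∀ (x t : V₁) (y' : V₂), R x y' (t, 0) = R t y' (x, 0))
    (a b c : V₁ × V₂) :
    (R a.1 b.2 - R b.1 a.2) c + (R b.1 c.2 - R c.1 b.2) a
      + (R c.1 a.2 - R a.1 c.2) b = 0 := by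
  obtain ⟨a₁, a₂⟩ := a
  obtain ⟨b₁, b₂⟩ := b
  obtain ⟨c₁, c₂⟩ := c
  simp only [LinearMap.sub_apply]
  rw [map_mk_eq_add (R a₁ b₂) c₁ c₂, map_mk_eq_add (R b₁ a₂) c₁ c₂,
    map_mk_eq_add (R b₁ c₂) a₁ a₂, map_mk_eq_add (R c₁ b₂) a₁ a₂,
    map_mk_eq_add (R c₁ a₂) b₁ b₂, map_mk_eq_add (R a₁ c₂) b₁ b₂,
    hsym₁ a₁ c₁ b₂, hsym₁ b₁ a₁ c₂, hsym₁ c₁ b₁ a₂,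
    hsym₂ a₁ b₂ c₂, hsym₂ b₁ c₂ a₂, hsym₂ c₁ a₂ b₂]
  abel

theorem stmt_14_general (V₁ V₂ : Type*) [AddCommGroup V₁] [Module ℝ V₁]
    [AddCommGroup V₂] [Module ℝ V₂]
    (R : V₁ →ₗ[ℝ] V₂ →ₗ[ℝ] Module.End ℝ (V₁ × V₂))
    (hsym₂ : ∀ (x : V₁) (y' z' : V₂), R x y' (0, z') = R x z' (0, y'))
    (hsym₁ : ∀ (x t : V₁) (y' : V₂), R x y' (t, 0) = R t y' (x, 0)) :
    ∀ a b c : V₁ × V₂,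
      (R a.1 b.2 - R b.1 a.2) c + (R b.1 c.2 - R c.1 b.2) a
        + (R c.1 a.2 - R a.1 c.2) b = 0 :=
  cyclic_sum_extension_eq_zero (fun x y' => R x y') hsym₂ hsym₁

theorem stmt_14 (V₁ V₂ : Type*) [AddCommGroup V₁] [Module ℝ V₁]
    [AddCommGroup V₂] [Module ℝ V₂]
    [FiniteDimensional ℝ V₁] [FiniteDimensional ℝ V₂]
    (g : LieSubalgebra ℝ (Module.End ℝ (V₁ × V₂)))
    (hpres₁ : ∀ A ∈ g, ∀ x : V₁, (A (x, 0)).2 = 0)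
    (hpres₂ : ∀ A ∈ g, ∀ y : V₂, (A (0, y)).1 = 0)
    (hfaith₁ : ∀ A ∈ g, (∀ x : V₁, A (x, 0) = 0) → A = 0)
    (hfaith₂ : ∀ A ∈ g, (∀ y : V₂, A (0, y) = 0) → A = 0)
    (R : V₁ →ₗ[ℝ] V₂ →ₗ[ℝ] Module.End ℝ (V₁ × V₂))
    (hval : ∀ x y', R x y' ∈ g)
    (hsym₂ : ∀ (x : V₁) (y' z' : V₂), R x y' (0, z') = R x z' (0, y'))
    (hsym₁ : ∀ (x t : V₁) (y' : V₂), R x y' (t, 0) = R t y' (x, 0)) :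
    ∀ a b c : V₁ × V₂,
      (R a.1 b.2 - R b.1 a.2) c + (R b.1 c.2 - R c.1 b.2) a
        + (R c.1 a.2 - R a.1 c.2) b = 0 :=
  stmt_14_general V₁ V₂ R hsym₂ hsym₁
end

section
/- For V = ℝ² and g the two-dimensional Lie algebra {(0,c;0,a) : a,c ∈ ℝ} ⊆ gl(2,ℝ) (type Tr-SO-1₂), g is indeed a Lie subalgebra (closed under the commutator bracket), acts indecomposably on ℝ² ⊕ ℝ² via the diagonal action but is not irreducible on ℝ² (it preserves the line spanned by (1,0)), and the space g^(2) = (S³(V*)⊗V) ∩ (V*⊗V*⊗g) is nonzero with evaluations spanning g. -/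
/-- Auxiliary symmetric bilinear map `x y ↦ (x 1 * y 1) • M`. -/
noncomputable def auxT (M : Module.End ℝ (Fin 2 → ℝ)) :
    (Fin 2 → ℝ) →ₗ[ℝ] (Fin 2 → ℝ) →ₗ[ℝ] Module.End ℝ (Fin 2 → ℝ) :=
  LinearMap.mk₂ ℝ (fun x y => (x 1 * y 1) • M)
    (fun x x' y => by simp [add_mul, add_smul])
    (fun c x y => by simp [smul_smul, mul_assoc])
    (fun x y y' => by simp [mul_add, add_smul])
    (fun c x y => by simp [smul_smul]; ring_nf)

theorem stmt_15
    (g : Submodule ℝ (Module.End ℝ (Fin 2 → ℝ)))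
    (hg : g = Submodule.span ℝ
      {Matrix.toLin' !![(0:ℝ),1;0,0], Matrix.toLin' !![(0:ℝ),0;0,1]}) :
    (∀ A ∈ g, ∀ B ∈ g, ⁅A, B⁆ ∈ g) ∧
    (∀ A ∈ g, A ![1, 0] ∈ Submodule.span ℝ {![(1:ℝ), 0]}) ∧
    (∃ T : (Fin 2 → ℝ) →ₗ[ℝ] (Fin 2 → ℝ) →ₗ[ℝ] Module.End ℝ (Fin 2 → ℝ),
      (∀ x y, T x y = T y x) ∧ (∀ x y z, T x y z = T x z y) ∧
      (∀ x y, T x y ∈ g) ∧ T ≠ 0) ∧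
    Submodule.span ℝ {B : Module.End ℝ (Fin 2 → ℝ) |
        ∃ T : (Fin 2 → ℝ) →ₗ[ℝ] (Fin 2 → ℝ) →ₗ[ℝ] Module.End ℝ (Fin 2 → ℝ),
          (∀ x y, T x y = T y x) ∧ (∀ x y z, T x y z = T x z y) ∧
          (∀ x y, T x y ∈ g) ∧ ∃ x y, B = T x y} = g := by
  subst hg
  set E : Module.End ℝ (Fin 2 → ℝ) := Matrix.toLin' !![(0:ℝ),1;0,0] with hE
  set F : Module.End ℝ (Fin 2 → ℝ) := Matrix.toLin' !![(0:ℝ),0;0,1] with hF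
  have hEE : E * E = 0 := by
    rw [hE, Module.End.mul_eq_comp, ← Matrix.toLin'_mul]
    have h : (!![(0:ℝ),1;0,0] * !![(0:ℝ),1;0,0]) = 0 := by
      ext i j; fin_cases i <;> fin_cases j <;>
        simp [Matrix.mul_apply, Fin.sum_univ_two]
    rw [h]; exact map_zero _
  have hEF : E * F = E := by
    rw [hE, hF, Module.End.mul_eq_comp, ← Matrix.toLin'_mul]
    congr 1
    ext i j; fin_cases i <;> fin_cases j <;>
      simp [Matrix.mul_apply, Fin.sum_univ_two]
  have hFE : F * E = 0 := by
    rw [hE, hF, Module.End.mul_eq_comp, ← Matrix.toLin'_mul]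
    have h : (!![(0:ℝ),0;0,1] * !![(0:ℝ),1;0,0]) = 0 := by
      ext i j; fin_cases i <;> fin_cases j <;>
        simp [Matrix.mul_apply, Fin.sum_univ_two]
    rw [h]; exact map_zero _
  have hFF : F * F = F := by
    rw [hF, Module.End.mul_eq_comp, ← Matrix.toLin'_mul]
    congr 1
    ext i j; fin_cases i <;> fin_cases j <;>
      simp [Matrix.mul_apply, Fin.sum_univ_two]
  have hEapp : ∀ z : Fin 2 → ℝ, E z = ![z 1, 0] := by
    intro z; funext i; fin_cases i <;>
      simp [hE, Matrix.toLin'_apply, Matrix.mulVec, dotProduct, Fin.sum_univ_two]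
  have hFapp : ∀ z : Fin 2 → ℝ, F z = ![0, z 1] := by
    intro z; funext i; fin_cases i <;>
      simp [hF, Matrix.toLin'_apply, Matrix.mulVec, dotProduct, Fin.sum_univ_two]
  -- properties of auxT
  have hTsym : ∀ M, ∀ x y : Fin 2 → ℝ, auxT M x y = auxT M y x := by
    intro M x y; simp [auxT, mul_comm]
  have hTsym2E : ∀ x y z : Fin 2 → ℝ, auxT E x y z = auxT E x z y := by
    intro x y z
    simp only [auxT, LinearMap.mk₂_apply, LinearMap.smul_apply, hEapp]
    funext i; fin_cases i <;> simp <;> ring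
  have hTsym2F : ∀ x y z : Fin 2 → ℝ, auxT F x y z = auxT F x z y := by
    intro x y z
    simp only [auxT, LinearMap.mk₂_apply, LinearMap.smul_apply, hFapp]
    funext i; fin_cases i <;> simp <;> ring
  have hEmem : E ∈ Submodule.span ℝ {E, F} := Submodule.subset_span (by left; rfl)
  have hFmem : F ∈ Submodule.span ℝ {E, F} := Submodule.subset_span (by right; rfl)
  have hTval : auxT E ![0,1] ![0,1] = E := by
    simp [auxT]
  have hTvalF : auxT F ![0,1] ![0,1] = F := by
    simp [auxT]
  refine ⟨?_, ?_, ?_, ?_⟩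
  · -- bracket closure
    intro A hA B hB
    obtain ⟨a, b, rfl⟩ := Submodule.mem_span_pair.mp hA
    obtain ⟨c, d, rfl⟩ := Submodule.mem_span_pair.mp hB
    refine Submodule.mem_span_pair.mpr ⟨a * d - c * b, 0, ?_⟩
    simp only [Ring.lie_def, add_mul, mul_add, smul_mul_assoc, mul_smul_comm,
      hEE, hEF, hFE, hFF, smul_zero, zero_add, add_zero, smul_smul, zero_smul, sub_smul]
    module
  · -- invariant line
    intro A hA
    obtain ⟨a, b, rfl⟩ := Submodule.mem_span_pair.mp hA
    have h1 : E ![1, 0] = 0 := by rw [hEapp]; funext i; fin_cases i <;> simp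
    have h2 : F ![1, 0] = 0 := by rw [hFapp]; funext i; fin_cases i <;> simp
    simp [h1, h2]
  · -- prolongation nonzero
    refine ⟨auxT E, hTsym E, hTsym2E, fun x y => ?_, ?_⟩
    · exact Submodule.smul_mem _ _ hEmem
    · intro h
      have : auxT E ![0,1] ![0,1] = 0 := by rw [h]; simp
      rw [hTval] at this
      have := congrFun (congrArg DFunLike.coe this) ![0,1]
      rw [hEapp] at this
      have := congrFun this 0
      norm_num at this
  · -- span of evaluations equals g
    apply le_antisymm
    · rw [Submodule.span_le]
      rintro B ⟨T, -, -, hmem, x, y, rfl⟩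
      exact hmem x y
    · rw [Submodule.span_le]
      rintro B hB
      rcases hB with rfl | rfl
      · exact Submodule.subset_span
          ⟨auxT E, hTsym E, hTsym2E, fun x y => Submodule.smul_mem _ _ hEmem,
            ![0,1], ![0,1], hTval.symm⟩
      · exact Submodule.subset_span
          ⟨auxT F, hTsym F, hTsym2F, fun x y => Submodule.smul_mem _ _ hFmem,
            ![0,1], ![0,1], hTvalF.symm⟩
end

section
/- For V = ℝ² and g = {(a,b;0,λa) : a,b ∈ ℝ} ⊆ gl(2,ℝ) with λ ∈ ℝ fixed, g is a Lie subalgebra, and the space g^(2) = (S³(V*)⊗V) ∩ (V*⊗V*⊗g) of totally symmetric trilinear maps with values (as endomorphisms in the third slot) in g is nonzero, with the evaluations {T(x,y,·) : T ∈ g^(2), x,y ∈ ℝ²} spanning g. -/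
noncomputable def Ee (l : ℝ) : Module.End ℝ (Fin 2 → ℝ) := Matrix.toLin' !![(1:ℝ),0;0,l]
noncomputable def Nn : Module.End ℝ (Fin 2 → ℝ) := Matrix.toLin' !![(0:ℝ),1;0,0]

noncomputable def Tt (l : ℝ) : (Fin 2 → ℝ) →ₗ[ℝ] (Fin 2 → ℝ) →ₗ[ℝ] Module.End ℝ (Fin 2 → ℝ) :=
  LinearMap.mk₂ ℝ (fun x y => (x 1 * y 1) • Ee l + (x 0 * y 1 + x 1 * y 0) • Nn)
    (by intro x x' y; simp only [Pi.add_apply]; module)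
    (by intro c x y; simp only [Pi.smul_apply, smul_eq_mul]; module)
    (by intro x y y'; simp only [Pi.add_apply]; module)
    (by intro x y y'; simp only [Pi.smul_apply, smul_eq_mul]; module)

lemma Ee_apply (l : ℝ) (z : Fin 2 → ℝ) : Ee l z = ![z 0, l * z 1] := by
  funext i
  fin_cases i <;>
    simp [Ee, Matrix.toLin'_apply, Matrix.mulVec, dotProduct, Fin.sum_univ_two]

lemma Nn_apply (z : Fin 2 → ℝ) : Nn z = ![z 1, 0] := by
  funext i
  fin_cases i <;>
    simp [Nn, Matrix.toLin'_apply, Matrix.mulVec, dotProduct, Fin.sum_univ_two]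

lemma mul_EN (l : ℝ) : Ee l * Nn = Nn := by
  apply LinearMap.ext; intro z
  simp [Module.End.mul_apply, Ee_apply, Nn_apply]

lemma mul_NE (l : ℝ) : Nn * Ee l = l • Nn := by
  apply LinearMap.ext; intro z
  simp [Module.End.mul_apply, Ee_apply, Nn_apply, mul_comm]

lemma mul_NN : Nn * Nn = 0 := by
  apply LinearMap.ext; intro z
  simp [Module.End.mul_apply, Nn_apply]

theorem stmt_16 (l : ℝ)
    (g : Submodule ℝ (Module.End ℝ (Fin 2 → ℝ)))
    (hg : g = Submodule.span ℝ
      {Matrix.toLin' !![(1:ℝ),0;0,l], Matrix.toLin' !![(0:ℝ),1;0,0]}) :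
    (∀ A ∈ g, ∀ B ∈ g, ⁅A, B⁆ ∈ g) ∧
    (∃ T : (Fin 2 → ℝ) →ₗ[ℝ] (Fin 2 → ℝ) →ₗ[ℝ] Module.End ℝ (Fin 2 → ℝ),
      (∀ x y, T x y = T y x) ∧ (∀ x y z, T x y z = T x z y) ∧
      (∀ x y, T x y ∈ g) ∧ T ≠ 0) ∧
    Submodule.span ℝ {B : Module.End ℝ (Fin 2 → ℝ) |
        ∃ T : (Fin 2 → ℝ) →ₗ[ℝ] (Fin 2 → ℝ) →ₗ[ℝ] Module.End ℝ (Fin 2 → ℝ),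
          (∀ x y, T x y = T y x) ∧ (∀ x y z, T x y z = T x z y) ∧
          (∀ x y, T x y ∈ g) ∧ ∃ x y, B = T x y} = g := by
  have hg' : g = Submodule.span ℝ {Ee l, Nn} := hg
  have hEmem : Ee l ∈ g := hg' ▸ Submodule.subset_span (by left; rfl)
  have hNmem : Nn ∈ g := hg' ▸ Submodule.subset_span (by right; rfl)
  -- properties of T
  have hT1 : ∀ x y, Tt l x y = Tt l y x := by
    intro x y
    simp only [Tt, LinearMap.mk₂_apply]
    ring_nf
  have hTval : ∀ x y z, Tt l x y z = ![x 1 * y 1 * z 0 + (x 0 * y 1 + x 1 * y 0) * z 1,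
      l * (x 1 * y 1 * z 1)] := by
    intro x y z
    simp only [Tt, LinearMap.mk₂_apply, LinearMap.add_apply, LinearMap.smul_apply,
      Ee_apply, Nn_apply]
    funext i; fin_cases i <;> simp <;> ring
  have hT2 : ∀ x y z, Tt l x y z = Tt l x z y := by
    intro x y z
    rw [hTval, hTval]
    funext i
    fin_cases i <;>
      simp only [Matrix.cons_val_zero, Matrix.cons_val_one, Matrix.head_cons] <;> ring
  have hT3 : ∀ x y, Tt l x y ∈ g := by
    intro x y
    simp only [Tt, LinearMap.mk₂_apply]
    exact g.add_mem (g.smul_mem _ hEmem) (g.smul_mem _ hNmem)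
  have he1 : Tt l ![(0:ℝ),1] ![(0:ℝ),1] = Ee l := by
    simp [Tt, LinearMap.mk₂_apply]
  have he2 : Tt l ![(1:ℝ),0] ![(0:ℝ),1] = Nn := by
    simp [Tt, LinearMap.mk₂_apply]
  have hEne : Ee l ≠ 0 := by
    intro h
    have := congrFun (congrArg (fun f : Module.End ℝ (Fin 2 → ℝ) => f ![1,0]) h) 0
    simp [Ee_apply] at this
  refine ⟨?_, ⟨Tt l, hT1, hT2, hT3, ?_⟩, ?_⟩
  · -- bracket closure
    intro A hA B hB
    rw [hg'] at hA hB
    rw [Submodule.mem_span_pair] at hA hB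
    obtain ⟨a, b, rfl⟩ := hA
    obtain ⟨c, d, rfl⟩ := hB
    have key : ⁅a • Ee l + b • Nn, c • Ee l + d • Nn⁆ = ((a*d - b*c)*(1-l)) • Nn := by
      simp only [Ring.lie_def]
      noncomm_ring
      simp only [mul_EN, mul_NE, mul_NN]
      match_scalars <;> simp [neg_one_smul] <;> ring_nf
    rw [key]
    exact g.smul_mem _ hNmem
  · -- T ≠ 0
    intro h
    apply hEne
    rw [← he1, h]
    simp
  · -- span equality
    apply le_antisymm
    · rw [Submodule.span_le]
      rintro B ⟨T, _, _, hmem, x, y, rfl⟩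
      exact hmem x y
    · nth_rewrite 1 [hg']
      rw [Submodule.span_le]
      rintro X (rfl | rfl)
      · exact Submodule.subset_span ⟨Tt l, hT1, hT2, hT3, ![0,1], ![0,1], he1.symm⟩
      · exact Submodule.subset_span ⟨Tt l, hT1, hT2, hT3, ![1,0], ![0,1], he2.symm⟩
end

section
/- Let g ⊆ gl(V) with V finite-dimensional over ℝ, and define g^(1) := (V*⊗g) ∩ (S²(V*)⊗V). If R : V × V* → g gives rise (as in the V ⊕ V* setting) to a formal curvature tensor on V ⊕ V* satisfying the first Bianchi identity, then for every fixed z' ∈ V*, the bilinear map (x,y) ↦ R(x,z')y on V × V belongs to g^(1), i.e. it is symmetric in (x,y) and x ↦ R(x,z') takes values in g. -/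
attribute [local instance] LieRing.ofAssociativeRing

theorem apply_comm_of_bianchi_fst {K V : Type*} [CommRing K] [AddCommGroup V] [Module K V]
    (R : V →ₗ[K] Module.Dual K V →ₗ[K] Module.End K V)
    (hBianchi : ∀ a b c : V × Module.Dual K V,
      (R a.1 b.2 - R b.1 a.2) c.1 + (R b.1 c.2 - R c.1 b.2) a.1
        + (R c.1 a.2 - R a.1 c.2) b.1 = 0)
    (x y : V) (z' : Module.Dual K V) : R x z' y = R y z' x := by
  -- At these arguments every term except `R x z' y` and `R y z' x` has a zero argument.
  have h := hBianchi (x, 0) (y, 0) (0, z')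
  simp only [map_zero, sub_zero, zero_sub, LinearMap.neg_apply, zero_add] at h
  rw [eq_comm, ← sub_eq_zero, sub_eq_add_neg]
  exact h

theorem stmt_17_general (V : Type*) [AddCommGroup V] [Module ℝ V]
    (g : LieSubalgebra ℝ (Module.End ℝ V))
    (R : V →ₗ[ℝ] Module.Dual ℝ V →ₗ[ℝ] Module.End ℝ V)
    (hval : ∀ x u, R x u ∈ g)
    (hBianchi : ∀ a b c : V × Module.Dual ℝ V,
      (((R a.1 b.2 - R b.1 a.2) c.1, -(c.2.comp (R a.1 b.2 - R b.1 a.2))) :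
        V × Module.Dual ℝ V)
      + ((R b.1 c.2 - R c.1 b.2) a.1, -(a.2.comp (R b.1 c.2 - R c.1 b.2)))
      + ((R c.1 a.2 - R a.1 c.2) b.1, -(b.2.comp (R c.1 a.2 - R a.1 c.2))) = 0) :
    ∀ z' : Module.Dual ℝ V,
      (∀ x y : V, R x z' y = R y z' x) ∧ (∀ x : V, R x z' ∈ g) := by
  intro z'
  have hBianchi_fst := fun a b c => congrArg Prod.fst (hBianchi a b c)
  exact ⟨fun x y => apply_comm_of_bianchi_fst R hBianchi_fst x y z', fun x => hval x z'⟩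

theorem stmt_17 (V : Type*) [AddCommGroup V] [Module ℝ V] [FiniteDimensional ℝ V]
    (g : LieSubalgebra ℝ (Module.End ℝ V))
    (R : V →ₗ[ℝ] Module.Dual ℝ V →ₗ[ℝ] Module.End ℝ V)
    (hval : ∀ x u, R x u ∈ g)
    (hBianchi : ∀ a b c : V × Module.Dual ℝ V,
      (((R a.1 b.2 - R b.1 a.2) c.1, -(c.2.comp (R a.1 b.2 - R b.1 a.2))) :
        V × Module.Dual ℝ V)
      + ((R b.1 c.2 - R c.1 b.2) a.1, -(a.2.comp (R b.1 c.2 - R c.1 b.2)))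
      + ((R c.1 a.2 - R a.1 c.2) b.1, -(b.2.comp (R c.1 a.2 - R a.1 c.2))) = 0) :
    ∀ z' : Module.Dual ℝ V,
      (∀ x y : V, R x z' y = R y z' x) ∧ (∀ x : V, R x z' ∈ g) :=
  stmt_17_general V g R hval hBianchi
end

section
/- Let V be a 2-dimensional real vector space and g ⊆ gl(V) a Lie subalgebra of dimension 1 spanned by an endomorphism A whose diagonal action on V ⊕ V, as an endomorphism of the 4-dimensional space, has rank ≥ 3. Then every alternating bilinear map R : (V⊕V)² → g·(diagonal action) ⊆ gl(V⊕V) satisfying the first Bianchi identity is identically zero; consequently g (acting on V ⊗ ℝ²) fails Berger's first criterion. -/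
theorem stmt_19 (V : Type*) [AddCommGroup V] [Module ℝ V] [FiniteDimensional ℝ V]
    (hdim : Module.finrank ℝ V = 2)
    (A : Module.End ℝ V)
    (hrank : 3 ≤ Module.finrank ℝ (LinearMap.range (A.prodMap A)))
    (R : (V × V) →ₗ[ℝ] (V × V) →ₗ[ℝ] Module.End ℝ (V × V))
    (hval : ∀ a b, ∃ c : ℝ, R a b = c • A.prodMap A)
    (halt : ∀ a b, R a b = - R b a)
    (hBianchi : ∀ a b c : V × V, R a b c + R b c a + R c a b = 0) :
    R = 0 := by
  have h4 : Module.finrank ℝ (V × V) = 4 := by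
    rw [Module.finrank_prod, hdim]
  -- kernel of A.prodMap A has finrank ≤ 1
  have hker : Module.finrank ℝ (LinearMap.ker (A.prodMap A)) ≤ 1 := by
    have h := LinearMap.finrank_range_add_finrank_ker (A.prodMap A)
    rw [h4] at h
    omega
  -- embed ker A × ker A into ker (A.prodMap A)
  have hkerA : LinearMap.ker A = ⊥ := by
    set f : (LinearMap.ker A × LinearMap.ker A) →ₗ[ℝ] (V × V) :=
      (LinearMap.ker A).subtype.prodMap (LinearMap.ker A).subtype with hf
    have hfr : LinearMap.range f ≤ LinearMap.ker (A.prodMap A) := by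
      rintro x ⟨⟨y, z⟩, rfl⟩
      simp [f, LinearMap.mem_ker, LinearMap.prodMap_apply, y.2, z.2]
    have hfi : Function.Injective f :=
      (Submodule.injective_subtype _).prodMap (Submodule.injective_subtype _)
    have h1 : Module.finrank ℝ (LinearMap.ker A × LinearMap.ker A)
        ≤ Module.finrank ℝ (LinearMap.ker (A.prodMap A)) := by
      calc Module.finrank ℝ (LinearMap.ker A × LinearMap.ker A)
          = Module.finrank ℝ (LinearMap.range f) :=
            (LinearMap.finrank_range_of_inj hfi).symm
        _ ≤ Module.finrank ℝ (LinearMap.ker (A.prodMap A)) :=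
            Submodule.finrank_mono hfr
    rw [Module.finrank_prod] at h1
    have : Module.finrank ℝ (LinearMap.ker A) = 0 := by omega
    exact Submodule.finrank_eq_zero.mp this
  have hinj : Function.Injective (A.prodMap A) := by
    rw [← LinearMap.ker_eq_bot, LinearMap.ker_prodMap, hkerA, Submodule.prod_bot]
  have hsurj : Function.Surjective (A.prodMap A) :=
    LinearMap.injective_iff_surjective.mp hinj
  -- main argument
  have key : ∀ a b : V × V, R a b = 0 := by
    intro a b
    classical
    obtain ⟨k, hk⟩ := hval a b
    rcases eq_or_ne k 0 with h0 | h0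
    · rw [hk, h0, zero_smul]
    exfalso
    have hspan : ∀ x : V × V,
        x ∈ Submodule.span ℝ ({A.prodMap A a, A.prodMap A b} : Set (V × V)) := by
      intro x
      obtain ⟨c, rfl⟩ := hsurj x
      have hB := hBianchi a b c
      obtain ⟨k1, hk1⟩ := hval b c
      obtain ⟨k2, hk2⟩ := hval c a
      rw [hk, hk1, hk2] at hB
      simp only [LinearMap.smul_apply] at hB
      have hc : k • (A.prodMap A) c = -(k1 • (A.prodMap A) a) - (k2 • (A.prodMap A) b) := by
        linear_combination (norm := module) hB
      have hc2 := congrArg (fun z => k⁻¹ • z) hc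
      simp only [smul_smul, inv_mul_cancel₀ h0, one_smul] at hc2
      rw [hc2]
      exact Submodule.smul_mem _ _ (Submodule.sub_mem _
        (Submodule.neg_mem _ (Submodule.smul_mem _ _ (Submodule.subset_span (by simp))))
        (Submodule.smul_mem _ _ (Submodule.subset_span (by simp))))
    have htop : Submodule.span ℝ ({A.prodMap A a, A.prodMap A b} : Set (V × V)) = ⊤ :=
      Submodule.eq_top_iff'.mpr hspan
    have hle := finrank_span_le_card (R := ℝ) ({A.prodMap A a, A.prodMap A b} : Set (V × V))
    rw [htop, finrank_top] at hle
    have hcard : ({A.prodMap A a, A.prodMap A b} : Set (V × V)).toFinset.card ≤ 2 := by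
      rw [Set.toFinset_insert, Set.toFinset_singleton]
      exact (Finset.card_insert_le _ _).trans (by simp)
    omega
  exact LinearMap.ext fun a => LinearMap.ext fun b => key a b
end
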